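/- arXiv:1807.06145 — 3 statements merged into one kernel-verified Lean document; each statement's English description precedes it below -/
import Mathlib

section
/- (Ulam–Hyers stability of the non-delayed first-order equation, the special case y′(t) = F(t, y(t)) noted in the paper's final Remark.) Assume 0 < T·L < 1 and let ε ≥ 0. If y : [t₀, T] → ℝ is differentiable at every t ∈ [t₀, T] and |y′(t) − F(t, y(t))| ≤ ε for all t ∈ [t₀, T], then there exists a unique function y₀ : [t₀, T] → ℝ, differentiable at every t ∈ [t₀, T], such that y₀(t₀) = y(t₀), y₀′(t) = F(t, y₀(t)) for all t ∈ [t₀, T], and |y(t) − y₀(t)| ≤ εT/(1 − T·L) for all t ∈ [t₀, T]. -/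
/-!
The Picard operator `u ↦ x₀ + ∫ₐᵗ F s (u s) ds` is Lipschitz on `C(Icc a b, E)` with constant
`L (b - a)`, hence a contraction when `L (b - a) < 1`. Its fixed point is a solution, and every
solution is a fixed point, which gives uniqueness. An `ε`-approximate solution `y` is moved by at
most `ε (b - a)`, so the a priori estimate `dist y y₀ ≤ dist y (P y) / (1 - L (b - a))` of the
Banach fixed point theorem is the stability bound; for `0 ≤ t₀` it is at most `ε T / (1 - T L)`.
-/

open Set Function Metric intervalIntegral
open scoped NNReal

def ContinuousOn.toContinuousMapOn {α β : Type*} [TopologicalSpace α] [TopologicalSpace β]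
    {f : α → β} {s : Set α} (hf : ContinuousOn f s) : C(s, β) :=
  ⟨s.domRestrict f, hf.domRestrict⟩

namespace ODE

variable {E : Type*} [NormedAddCommGroup E] [NormedSpace ℝ E]
  {F : ℝ → E → E} {K : ℝ≥0} {a b t₀ : ℝ} {x₀ : E}

lemma picard_congr {α β : ℝ → E} {t : ℝ} (h : EqOn α β (uIcc t₀ t)) :
    picard F t₀ x₀ α t = picard F t₀ x₀ β t := by
  simp only [picard_apply]
  congr 1
  exact integral_congr fun s hs => by simp only [h hs]

lemma dist_picard_le (hF : Continuous (uncurry F)) (hK : ∀ t, LipschitzWith K (F t))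
    {α β : ℝ → E} (hα : Continuous α) (hβ : Continuous β) {δ : ℝ}
    (hαβ : ∀ s, dist (α s) (β s) ≤ δ) (t : ℝ) :
    dist (picard F t₀ x₀ α t) (picard F t₀ x₀ β t) ≤ K * δ * |t - t₀| := by
  have hint (γ : ℝ → E) (hγ : Continuous γ) :
      IntervalIntegrable (fun s => F s (γ s)) MeasureTheory.volume t₀ t :=
    (hF.comp (continuous_id.prodMk hγ)).intervalIntegrable _ _
  rw [picard_apply, picard_apply, dist_add_left, dist_eq_norm,
    ← integral_sub (hint α hα) (hint β hβ)]
  refine norm_integral_le_of_norm_le_const fun s _ => ?_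
  rw [← dist_eq_norm]
  exact ((hK s).dist_le_mul _ _).trans (by gcongr; exact hαβ s)

variable [CompleteSpace E]

lemma hasDerivAt_picard (hF : Continuous (uncurry F)) {α : ℝ → E} (hα : Continuous α)
    (t : ℝ) :
    HasDerivAt (picard F t₀ x₀ α) (F t (α t)) t :=
  ((hF.comp (continuous_id.prodMk hα)).integral_hasStrictDerivAt t₀ t).hasDerivAt.const_add x₀

lemma continuous_picard (hF : Continuous (uncurry F)) {α : ℝ → E} (hα : Continuous α) :
    Continuous (picard F t₀ x₀ α) :=
  continuous_iff_continuousAt.2 fun t => (hasDerivAt_picard hF hα t).continuousAt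

variable (hab : a ≤ b) (hF : Continuous (uncurry F))

noncomputable def picardIcc (x₀ : E) (u : C(Icc a b, E)) : C(Icc a b, E) :=
  ⟨fun t => picard F a x₀ (u.IccExtend hab) t,
    (continuous_picard hF (u.IccExtend hab).continuous).comp continuous_subtype_val⟩

lemma picardIcc_apply (u : C(Icc a b, E)) (t : Icc a b) :
    picardIcc hab hF x₀ u t = picard F a x₀ (u.IccExtend hab) t :=
  rfl

lemma dist_picardIcc_le (hK : ∀ t, LipschitzWith K (F t)) (u v : C(Icc a b, E)) :
    dist (picardIcc hab hF x₀ u) (picardIcc hab hF x₀ v) ≤ K * (b - a) * dist u v := by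
  refine (ContinuousMap.dist_le (by have := sub_nonneg.2 hab; positivity)).2 fun t => ?_
  have hαβ (s : ℝ) : dist (u.IccExtend hab s) (v.IccExtend hab s) ≤ dist u v :=
    ContinuousMap.dist_apply_le_dist (projIcc a b hab s)
  calc _ ≤ K * dist u v * |t - a| :=
        dist_picard_le hF hK (u.IccExtend hab).continuous (v.IccExtend hab).continuous hαβ t
    _ ≤ K * (b - a) * dist u v := by
        rw [abs_of_nonneg (sub_nonneg.2 t.2.1), mul_right_comm]
        gcongr
        exact t.2.2

lemma contractingWith_picardIcc (hK : ∀ t, LipschitzWith K (F t)) (hKab : K * (b - a) < 1)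
    (x₀ : E) : ContractingWith (K * (b - a).toNNReal) (picardIcc hab hF x₀) := by
  have hcoe : ((K * (b - a).toNNReal : ℝ≥0) : ℝ) = K * (b - a) := by
    rw [NNReal.coe_mul, Real.coe_toNNReal _ (sub_nonneg.2 hab)]
  refine ⟨by rw [← NNReal.coe_lt_coe, hcoe]; exact hKab, .of_dist_le_mul fun u v => ?_⟩
  rw [hcoe]
  exact dist_picardIcc_le hab hF hK u v

lemma isFixedPt_picardIcc_of_hasDerivWithinAt {z : ℝ → E}
    (hz : ∀ t ∈ Icc a b, HasDerivWithinAt z (F t (z t)) (Icc a b) t) :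
    IsFixedPt (picardIcc hab hF (z a))
      (HasDerivWithinAt.continuousOn hz).toContinuousMapOn := by
  ext ⟨t, ht⟩
  have hsub : uIcc a t ⊆ Icc a b := uIcc_subset_Icc (left_mem_Icc.2 hab) ht
  rw [picardIcc_apply, ContinuousMap.coe_IccExtend,
    picard_congr (β := z) fun s hs => IccExtend_of_mem hab _ (hsub hs)]
  exact picard_eq_of_hasDerivAt (u := univ) hF.continuousOn
    (fun s hs => (hz s (hsub hs)).mono hsub) (mapsTo_univ _ _)

lemma dist_picardIcc_le_of_norm_deriv_sub_le {y y' : ℝ → E} {ε : ℝ}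
    (hy : ∀ t ∈ Icc a b, HasDerivWithinAt y (y' t) (Icc a b) t)
    (hy' : ∀ t ∈ Icc a b, ‖y' t - F t (y t)‖ ≤ ε) :
    dist (HasDerivWithinAt.continuousOn hy).toContinuousMapOn
      (picardIcc hab hF (y a) (HasDerivWithinAt.continuousOn hy).toContinuousMapOn) ≤
        ε * (b - a) := by
  set u := (HasDerivWithinAt.continuousOn hy).toContinuousMapOn
  have hε : 0 ≤ ε := (norm_nonneg _).trans (hy' a (left_mem_Icc.2 hab))
  refine (ContinuousMap.dist_le (by have := sub_nonneg.2 hab; positivity)).2 fun t => ?_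
  have hdefect : ∀ s ∈ Icc a b,
      HasDerivWithinAt (fun s => y s - picard F a (y a) (u.IccExtend hab) s)
        (y' s - F s (y s)) (Icc a b) s := fun s hs => by
    have := (hasDerivAt_picard hF (u.IccExtend hab).continuous (t₀ := a) (x₀ := y a) s)
    rw [ContinuousMap.coe_IccExtend, IccExtend_of_mem hab _ hs] at this
    exact (hy s hs).sub this.hasDerivWithinAt
  calc dist (u t) (picardIcc hab hF (y a) u t)
      = ‖(y t - picard F a (y a) (u.IccExtend hab) t) -
          (y a - picard F a (y a) (u.IccExtend hab) a)‖ := by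
        simp [dist_eq_norm, picardIcc_apply, u, ContinuousOn.toContinuousMapOn]
    _ ≤ ε * (t - a) :=
        norm_image_sub_le_of_norm_deriv_le_segment' hdefect
          (fun s hs => hy' s (Ico_subset_Icc_self hs)) t t.2
    _ ≤ ε * (b - a) := by gcongr; exact t.2.2

variable (hK : ∀ t, LipschitzWith K (F t)) (hKab : K * (b - a) < 1)

/-- Defined on all of `ℝ`, so that it has two-sided derivatives at the endpoints of `Icc a b`. -/
noncomputable def picardSolution (x₀ : E) : ℝ → E :=
  picard F a x₀
    ((ContractingWith.fixedPoint _ (contractingWith_picardIcc hab hF hK hKab x₀)).IccExtend hab)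

lemma picardSolution_apply_left : picardSolution hab hF hK hKab x₀ a = x₀ :=
  picard_apply₀

lemma picardSolution_eq_fixedPoint (t : Icc a b) :
    picardSolution hab hF hK hKab x₀ t =
      ContractingWith.fixedPoint _ (contractingWith_picardIcc hab hF hK hKab x₀) t :=
  DFunLike.congr_fun (contractingWith_picardIcc hab hF hK hKab x₀).fixedPoint_isFixedPt t

lemma hasDerivAt_picardSolution {t : ℝ} (ht : t ∈ Icc a b) :
    HasDerivAt (picardSolution hab hF hK hKab x₀)
      (F t (picardSolution hab hF hK hKab x₀ t)) t := by
  set u := ContractingWith.fixedPoint _ (contractingWith_picardIcc hab hF hK hKab x₀)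
  have := hasDerivAt_picard hF (t₀ := a) (x₀ := x₀) (u.IccExtend hab).continuous t
  rwa [ContinuousMap.coe_IccExtend, IccExtend_of_mem hab _ ht,
    ← picardSolution_eq_fixedPoint] at this

lemma eq_picardSolution_of_hasDerivWithinAt {z : ℝ → E} (hz₀ : z a = x₀)
    (hz : ∀ t ∈ Icc a b, HasDerivWithinAt z (F t (z t)) (Icc a b) t) {t : ℝ}
    (ht : t ∈ Icc a b) :
    z t = picardSolution hab hF hK hKab x₀ t := by
  subst hz₀
  rw [picardSolution_eq_fixedPoint hab hF hK hKab ⟨t, ht⟩,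
    ← (contractingWith_picardIcc hab hF hK hKab _).fixedPoint_unique
      (isFixedPt_picardIcc_of_hasDerivWithinAt hab hF hz)]
  rfl

lemma norm_sub_picardSolution_le {y y' : ℝ → E} {ε : ℝ}
    (hy : ∀ t ∈ Icc a b, HasDerivWithinAt y (y' t) (Icc a b) t)
    (hy' : ∀ t ∈ Icc a b, ‖y' t - F t (y t)‖ ≤ ε) {t : ℝ} (ht : t ∈ Icc a b) :
    ‖y t - picardSolution hab hF hK hKab (y a) t‖ ≤ ε * (b - a) / (1 - K * (b - a)) := by
  set u := (HasDerivWithinAt.continuousOn hy).toContinuousMapOn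
  have hP := contractingWith_picardIcc hab hF hK hKab (y a)
  have hfix := hP.dist_fixedPoint_le u
  rw [NNReal.coe_mul, Real.coe_toNNReal _ (sub_nonneg.2 hab)] at hfix
  calc ‖y t - picardSolution hab hF hK hKab (y a) t‖
        = dist (u ⟨t, ht⟩) (hP.fixedPoint _ ⟨t, ht⟩) := by
        rw [picardSolution_eq_fixedPoint hab hF hK hKab ⟨t, ht⟩, dist_eq_norm]; rfl
    _ ≤ dist u (hP.fixedPoint _) := ContinuousMap.dist_apply_le_dist _
    _ ≤ dist u (picardIcc hab hF (y a) u) / (1 - K * (b - a)) := hfix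
    _ ≤ ε * (b - a) / (1 - K * (b - a)) := by
        gcongr
        exact dist_picardIcc_le_of_norm_deriv_sub_le hab hF hy hy'

end ODE

theorem ulam_hyers_first_order_general
    (t₀ T : ℝ) (ht₀ : 0 ≤ t₀) (htT : t₀ < T)
    (L : ℝ) (hL : 0 < L)
    (F : ℝ → ℝ → ℝ)
    (hFcont : Continuous fun p : ℝ × ℝ => F p.1 p.2)
    (hFlip : ∀ t x z : ℝ, |F t x - F t z| ≤ L * |x - z|)
    (hcontr1 : T * L < 1)
    (ε : ℝ) (hε : 0 ≤ ε)
    (y : ℝ → ℝ)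
    (hydiff : ∀ t ∈ Icc t₀ T, DifferentiableAt ℝ y t)
    (hyineq : ∀ t ∈ Icc t₀ T, |deriv y t - F t (y t)| ≤ ε) :
    ∃ y₀ : ℝ → ℝ,
      (y₀ t₀ = y t₀ ∧
        (∀ t ∈ Icc t₀ T, HasDerivAt y₀ (F t (y₀ t)) t)) ∧
      (∀ t ∈ Icc t₀ T, |y t - y₀ t| ≤ ε * T / (1 - T * L)) ∧
      (∀ z : ℝ → ℝ, z t₀ = y t₀ →
        (∀ t ∈ Icc t₀ T, HasDerivAt z (F t (z t)) t) →
        ∀ t ∈ Icc t₀ T, z t = y₀ t) := by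
  set K : ℝ≥0 := ⟨L, hL.le⟩
  have hK (t : ℝ) : LipschitzWith K (F t) := .of_dist_le_mul (hFlip t)
  have hlen : T - t₀ ≤ T := by linarith
  have hKab : K * (T - t₀) < 1 := by
    show L * (T - t₀) < 1
    nlinarith
  set y₀ := ODE.picardSolution htT.le hFcont hK hKab (y t₀)
  refine ⟨y₀, ⟨ODE.picardSolution_apply_left _ _ _ _,
    fun t ht => ODE.hasDerivAt_picardSolution _ _ _ _ ht⟩, fun t ht => ?_,
    fun z hz₀ hz t ht => ODE.eq_picardSolution_of_hasDerivWithinAt _ _ _ _ hz₀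
      (fun s hs => (hz s hs).hasDerivWithinAt) ht⟩
  calc |y t - y₀ t|
      ≤ ε * (T - t₀) / (1 - L * (T - t₀)) :=
        ODE.norm_sub_picardSolution_le htT.le hFcont hK hKab
          (fun s hs => (hydiff s hs).hasDerivAt.hasDerivWithinAt) hyineq ht
    _ ≤ ε * T / (1 - T * L) := by
        rw [mul_comm T L]
        gcongr
        case hc => exact mul_nonneg hε (by linarith)
        case hd => linarith [mul_comm T L]

/-- Ulam–Hyers stability of the non-delayed first-order equation
`y' t = F t (y t)` (special case noted in the final Remark of the paper). -/
theorem ulam_hyers_first_order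
    (t₀ T : ℝ) (ht₀ : 0 ≤ t₀) (htT : t₀ < T)
    (L : ℝ) (hL : 0 < L)
    (F : ℝ → ℝ → ℝ)
    (hFcont : Continuous fun p : ℝ × ℝ => F p.1 p.2)
    (hFlip : ∀ t x z : ℝ, |F t x - F t z| ≤ L * |x - z|)
    (hcontr0 : 0 < T * L) (hcontr1 : T * L < 1)
    (ε : ℝ) (hε : 0 ≤ ε)
    (y : ℝ → ℝ)
    (hydiff : ∀ t ∈ Icc t₀ T, DifferentiableAt ℝ y t)
    (hyineq : ∀ t ∈ Icc t₀ T, |deriv y t - F t (y t)| ≤ ε) :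
    ∃ y₀ : ℝ → ℝ,
      (y₀ t₀ = y t₀ ∧
        (∀ t ∈ Icc t₀ T, HasDerivAt y₀ (F t (y₀ t)) t)) ∧
      (∀ t ∈ Icc t₀ T, |y t - y₀ t| ≤ ε * T / (1 - T * L)) ∧
      (∀ z : ℝ → ℝ, z t₀ = y t₀ →
        (∀ t ∈ Icc t₀ T, HasDerivAt z (F t (z t)) t) →
        ∀ t ∈ Icc t₀ T, z t = y₀ t) :=
  ulam_hyers_first_order_general t₀ T ht₀ htT L hL F hFcont hFlip hcontr1 ε hε y hydiff hyineq
end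

section
/- (Strict contractivity of the Picard operator in the weighted generalized metric, from the proof of Theorem 2.) Assume additionally that φ₀ : I → ℝ is continuous, positive and nondecreasing, and that K > 0 satisfies (1/Γ(α)) ∫_{t₀}^{t} ψ′(u)(ψ(t) − ψ(u))^{α−1} φ₀(u) du ≤ K·φ₀(t) for all t ∈ [t₀, T]. Let φ, μ : I → ℝ be continuous with φ(t) = μ(t) = Φ(t) for all t ∈ [t₀ − a, t₀], and let M ≥ 0 be such that |φ(t) − μ(t)| ≤ M·φ₀(t) for all t ∈ I. Then |(Ωφ)(t) − (Ωμ)(t)| ≤ M·K(L₁ + L₂)·φ₀(t) for all t ∈ I. -/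
open Set intervalIntegral MeasureTheory

/-!
For `t ≤ t₀` both images equal `Φ`. For `t > t₀` the initial terms cancel and the difference
is `1/Γ(α)` times the integral of the nonnegative kernel `ψ′(u)(ψ(t) − ψ(u))^{α−1}` against
`F(u, φ(u), φ(u − a)) − F(u, μ(u), μ(u − a))`. The Lipschitz bound and `φ₀(u − a) ≤ φ₀(u)`
bound this integrand by `(L₁ + L₂) M φ₀(u)`, and the defining inequality of `K` finishes the
estimate. The kernel is integrable despite its singularity at `u = t` because it is the
derivative of the continuous function `−(ψ(t) − ψ(u))^α / α`.
-/

section Kernel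

variable {ψ : ℝ → ℝ} {α t u : ℝ}

theorem hasDerivAt_neg_rpow_sub_div (hψ : DifferentiableAt ℝ ψ u) (hα : α ≠ 0)
    (hu : ψ u < ψ t) :
    HasDerivAt (fun v => -(ψ t - ψ v) ^ α / α) (deriv ψ u * (ψ t - ψ u) ^ (α - 1)) u := by
  have hpow := (Real.hasDerivAt_rpow_const (p := α) (Or.inl (sub_pos.mpr hu).ne')).comp u
    (hψ.hasDerivAt.const_sub (ψ t))
  exact (hpow.neg.div_const α).congr_deriv (by field_simp)

theorem fractionalKernel_nonneg (hψ : Monotone ψ) (hut : u ≤ t) :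
    0 ≤ deriv ψ u * (ψ t - ψ u) ^ (α - 1) :=
  mul_nonneg hψ.deriv_nonneg (Real.rpow_nonneg (sub_nonneg.mpr (hψ hut)) _)

theorem intervalIntegrable_fractionalKernel (hψd : Differentiable ℝ ψ) (hψ : StrictMono ψ)
    (hα : 0 < α) {t₀ : ℝ} (ht : t₀ ≤ t) :
    IntervalIntegrable (fun u => deriv ψ u * (ψ t - ψ u) ^ (α - 1)) volume t₀ t := by
  refine intervalIntegrable_deriv_of_nonneg (g := fun v => -(ψ t - ψ v) ^ α / α) ?_ ?_ ?_
  · exact ((continuous_const.sub hψd.continuous).rpow_const fun _ => Or.inr hα.le).neg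
      |>.div_const α |>.continuousOn
  · intro u hu
    rw [min_eq_left ht, max_eq_right ht] at hu
    exact hasDerivAt_neg_rpow_sub_div (hψd u) hα.ne' (hψ hu.2)
  · intro u hu
    rw [min_eq_left ht, max_eq_right ht] at hu
    exact fractionalKernel_nonneg hψ.monotone hu.2.le

end Kernel

theorem abs_integral_mul_sub_integral_mul_le {w f g h : ℝ → ℝ} {a b C : ℝ} (hab : a ≤ b)
    (hw : IntervalIntegrable w volume a b) (hw0 : ∀ u ∈ Icc a b, 0 ≤ w u)
    (hf : ContinuousOn f (Icc a b)) (hg : ContinuousOn g (Icc a b))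
    (hh : ContinuousOn h (Icc a b)) (hfg : ∀ u ∈ Icc a b, |f u - g u| ≤ C * h u) :
    |(∫ u in a..b, w u * f u) - ∫ u in a..b, w u * g u| ≤ C * ∫ u in a..b, w u * h u := by
  rw [← uIcc_of_le hab] at hf hg hh
  have hwf := hw.mul_continuousOn hf
  have hwg := hw.mul_continuousOn hg
  rw [← integral_sub hwf hwg, ← intervalIntegral.integral_const_mul]
  refine (abs_integral_le_integral_abs hab).trans <|
    integral_mono_on hab (hwf.sub hwg).abs ((hw.mul_continuousOn hh).const_mul C) fun u hu => ?_
  rw [← mul_sub, abs_mul, abs_of_nonneg (hw0 u hu), mul_left_comm]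
  exact mul_le_mul_of_nonneg_left (hfg u hu) (hw0 u hu)

theorem abs_sub_le_of_lipschitz_bound {F : ℝ → ℝ → ℝ → ℝ} {L₁ L₂ : ℝ}
    (hF : ∀ t x y z w : ℝ, |F t x y - F t z w| ≤ L₁ * |x - z| + L₂ * |y - w|)
    (hL₁ : 0 ≤ L₁) (hL₂ : 0 ≤ L₂) {t x y z w r : ℝ} (hxz : |x - z| ≤ r) (hyw : |y - w| ≤ r) :
    |F t x y - F t z w| ≤ (L₁ + L₂) * r := by
  calc |F t x y - F t z w| ≤ L₁ * |x - z| + L₂ * |y - w| := hF t x y z w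
    _ ≤ L₁ * r + L₂ * r := by gcongr
    _ = (L₁ + L₂) * r := by ring

theorem ContinuousOn.comp_delay {F : ℝ → ℝ → ℝ → ℝ} {g : ℝ → ℝ} {s S : Set ℝ} {a : ℝ}
    (hF : Continuous fun p : ℝ × ℝ × ℝ => F p.1 p.2.1 p.2.2) (hg : ContinuousOn g s)
    (hS : S ⊆ s) (hSa : ∀ u ∈ S, u - a ∈ s) :
    ContinuousOn (fun u => F u (g u) (g (u - a))) S :=
  hF.comp_continuousOn <| continuousOn_id.prodMk <|
    (hg.mono hS).prodMk (hg.comp (continuous_sub_right a).continuousOn hSa)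

theorem picard_operator_contractive_weighted_general
    (t₀ T a : ℝ) (ha : 0 < a)
    (ψ : ℝ → ℝ) (hψC : ContDiff ℝ 1 ψ) (hψmono : StrictMono ψ)
    (α γ : ℝ) (hα0 : 0 < α)
    (L₁ L₂ : ℝ) (hL₁ : 0 < L₁) (hL₂ : 0 < L₂)
    (F : ℝ → ℝ → ℝ → ℝ)
    (hFcont : Continuous fun p : ℝ × ℝ × ℝ => F p.1 p.2.1 p.2.2)
    (hFlip : ∀ t x y z w : ℝ, |F t x y - F t z w| ≤ L₁ * |x - z| + L₂ * |y - w|)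
    (Φ : ℝ → ℝ)
    (φ₀ : ℝ → ℝ) (hφ₀cont : ContinuousOn φ₀ (Icc (t₀ - a) T))
    (hφ₀pos : ∀ t ∈ Icc (t₀ - a) T, 0 < φ₀ t)
    (hφ₀mono : MonotoneOn φ₀ (Icc (t₀ - a) T))
    (K : ℝ) (hK : 0 < K)
    (hKint : ∀ t ∈ Icc t₀ T,
      (1 / Real.Gamma α) *
          ∫ u in t₀..t, deriv ψ u * (ψ t - ψ u) ^ (α - 1) * φ₀ u ≤ K * φ₀ t)
    (φ μ : ℝ → ℝ)
    (hφcont : ContinuousOn φ (Icc (t₀ - a) T)) (hμcont : ContinuousOn μ (Icc (t₀ - a) T))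
    (M : ℝ) (hM : 0 ≤ M)
    (hMbound : ∀ t ∈ Icc (t₀ - a) T, |φ t - μ t| ≤ M * φ₀ t)
    (Ωφ Ωμ : ℝ → ℝ)
    (hΩφ₁ : ∀ t ∈ Icc (t₀ - a) t₀, Ωφ t = Φ t)
    (hΩφ₂ : ∀ t ∈ Ioc t₀ T,
      Ωφ t = (ψ t - ψ t₀) ^ (1 - γ) / Real.Gamma γ * Φ t₀ +
        (1 / Real.Gamma α) *
          ∫ u in t₀..t, deriv ψ u * (ψ t - ψ u) ^ (α - 1) * F u (φ u) (φ (u - a)))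
    (hΩμ₁ : ∀ t ∈ Icc (t₀ - a) t₀, Ωμ t = Φ t)
    (hΩμ₂ : ∀ t ∈ Ioc t₀ T,
      Ωμ t = (ψ t - ψ t₀) ^ (1 - γ) / Real.Gamma γ * Φ t₀ +
        (1 / Real.Gamma α) *
          ∫ u in t₀..t, deriv ψ u * (ψ t - ψ u) ^ (α - 1) * F u (μ u) (μ (u - a))) :
    ∀ t ∈ Icc (t₀ - a) T, |Ωφ t - Ωμ t| ≤ M * (K * (L₁ + L₂)) * φ₀ t := by
  intro t ⟨ht₀, htT⟩
  rcases le_or_gt t t₀ with hle | hlt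
  · rw [hΩφ₁ t ⟨ht₀, hle⟩, hΩμ₁ t ⟨ht₀, hle⟩, sub_self, abs_zero]
    have := hφ₀pos t ⟨ht₀, htT⟩
    positivity
  have hsub : Icc t₀ t ⊆ Icc (t₀ - a) T := Icc_subset_Icc (by linarith) htT
  have hdelay : ∀ u ∈ Icc t₀ t, u - a ∈ Icc (t₀ - a) T := fun u hu =>
    ⟨by linarith [hu.1], by linarith [hu.2]⟩
  have hpoint : ∀ u ∈ Icc t₀ t,
      |F u (φ u) (φ (u - a)) - F u (μ u) (μ (u - a))| ≤ (L₁ + L₂) * M * φ₀ u := fun u hu => by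
    rw [mul_assoc]
    refine abs_sub_le_of_lipschitz_bound hFlip hL₁.le hL₂.le (hMbound u (hsub hu)) ?_
    exact (hMbound _ (hdelay u hu)).trans <| mul_le_mul_of_nonneg_left
      (hφ₀mono (hdelay u hu) (hsub hu) (by linarith)) hM
  have hintegral := abs_integral_mul_sub_integral_mul_le hlt.le
    (intervalIntegrable_fractionalKernel (hψC.differentiable one_ne_zero) hψmono hα0 hlt.le)
    (fun u hu => fractionalKernel_nonneg hψmono.monotone hu.2)
    (hφcont.comp_delay hFcont hsub hdelay) (hμcont.comp_delay hFcont hsub hdelay)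
    (hφ₀cont.mono hsub) hpoint
  have hΓ : 0 < 1 / Real.Gamma α := one_div_pos.mpr (Real.Gamma_pos_of_pos hα0)
  rw [hΩφ₂ t ⟨hlt, htT⟩, hΩμ₂ t ⟨hlt, htT⟩, add_sub_add_left_eq_sub, ← mul_sub, abs_mul,
    abs_of_pos hΓ]
  calc 1 / Real.Gamma α * |_| ≤ 1 / Real.Gamma α * ((L₁ + L₂) * M *
        ∫ u in t₀..t, deriv ψ u * (ψ t - ψ u) ^ (α - 1) * φ₀ u) := by gcongr
    _ = (L₁ + L₂) * M * (1 / Real.Gamma α *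
        ∫ u in t₀..t, deriv ψ u * (ψ t - ψ u) ^ (α - 1) * φ₀ u) := by ring
    _ ≤ (L₁ + L₂) * M * (K * φ₀ t) :=
      mul_le_mul_of_nonneg_left (hKint t ⟨hlt.le, htT⟩) (by positivity)
    _ = M * (K * (L₁ + L₂)) * φ₀ t := by ring

/-- Strict contractivity of the Picard operator `Ω` of the ψ-Hilfer fractional
delay equation, in the weighted generalized metric (from the proof of
Theorem 2 of the paper). -/
theorem picard_operator_contractive_weighted
    (t₀ T a : ℝ) (htT : t₀ < T) (ha : 0 < a)
    (ψ : ℝ → ℝ) (hψC : ContDiff ℝ 1 ψ) (hψmono : StrictMono ψ)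
    (hψ' : ∀ t ∈ Icc t₀ T, 0 < deriv ψ t)
    (α β γ : ℝ) (hα0 : 0 < α) (hα1 : α ≤ 1) (hβ0 : 0 ≤ β) (hβ1 : β ≤ 1)
    (hγ : γ = α + β * (1 - α))
    (L₁ L₂ : ℝ) (hL₁ : 0 < L₁) (hL₂ : 0 < L₂)
    (F : ℝ → ℝ → ℝ → ℝ)
    (hFcont : Continuous fun p : ℝ × ℝ × ℝ => F p.1 p.2.1 p.2.2)
    (hFlip : ∀ t x y z w : ℝ, |F t x y - F t z w| ≤ L₁ * |x - z| + L₂ * |y - w|)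
    (Φ : ℝ → ℝ) (hΦ : ContinuousOn Φ (Icc (t₀ - a) t₀))
    (φ₀ : ℝ → ℝ) (hφ₀cont : ContinuousOn φ₀ (Icc (t₀ - a) T))
    (hφ₀pos : ∀ t ∈ Icc (t₀ - a) T, 0 < φ₀ t)
    (hφ₀mono : MonotoneOn φ₀ (Icc (t₀ - a) T))
    (K : ℝ) (hK : 0 < K)
    (hKint : ∀ t ∈ Icc t₀ T,
      (1 / Real.Gamma α) *
          ∫ u in t₀..t, deriv ψ u * (ψ t - ψ u) ^ (α - 1) * φ₀ u ≤ K * φ₀ t)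
    (φ μ : ℝ → ℝ)
    (hφcont : ContinuousOn φ (Icc (t₀ - a) T)) (hμcont : ContinuousOn μ (Icc (t₀ - a) T))
    (hφΦ : ∀ t ∈ Icc (t₀ - a) t₀, φ t = Φ t) (hμΦ : ∀ t ∈ Icc (t₀ - a) t₀, μ t = Φ t)
    (M : ℝ) (hM : 0 ≤ M)
    (hMbound : ∀ t ∈ Icc (t₀ - a) T, |φ t - μ t| ≤ M * φ₀ t)
    (Ωφ Ωμ : ℝ → ℝ)
    (hΩφ₁ : ∀ t ∈ Icc (t₀ - a) t₀, Ωφ t = Φ t)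
    (hΩφ₂ : ∀ t ∈ Ioc t₀ T,
      Ωφ t = (ψ t - ψ t₀) ^ (1 - γ) / Real.Gamma γ * Φ t₀ +
        (1 / Real.Gamma α) *
          ∫ u in t₀..t, deriv ψ u * (ψ t - ψ u) ^ (α - 1) * F u (φ u) (φ (u - a)))
    (hΩμ₁ : ∀ t ∈ Icc (t₀ - a) t₀, Ωμ t = Φ t)
    (hΩμ₂ : ∀ t ∈ Ioc t₀ T,
      Ωμ t = (ψ t - ψ t₀) ^ (1 - γ) / Real.Gamma γ * Φ t₀ +
        (1 / Real.Gamma α) *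
          ∫ u in t₀..t, deriv ψ u * (ψ t - ψ u) ^ (α - 1) * F u (μ u) (μ (u - a))) :
    ∀ t ∈ Icc (t₀ - a) T, |Ωφ t - Ωμ t| ≤ M * (K * (L₁ + L₂)) * φ₀ t :=
  picard_operator_contractive_weighted_general t₀ T a ha ψ hψC hψmono α γ hα0 L₁ L₂ hL₁ hL₂ F hFcont
    hFlip Φ φ₀ hφ₀cont hφ₀pos hφ₀mono K hK hKint φ μ hφcont hμcont M hM hMbound Ωφ Ωμ hΩφ₁ hΩφ₂ hΩμ₁
    hΩμ₂
end

section
/- (Strict contractivity of the Picard operator in the uniform metric, from the proof of Theorem 3.) Let φ, μ : I → ℝ be continuous with φ(t) = μ(t) = Φ(t) for all t ∈ [t₀ − a, t₀], and let M ≥ 0 be such that |φ(t) − μ(t)| ≤ M for all t ∈ I. Then |(Ωφ)(t) − (Ωμ)(t)| ≤ M·(L₁ + L₂)·(ψ(T) − ψ(t₀))^α / Γ(α + 1) for all t ∈ I. -/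
open Set intervalIntegral

/-!
Outside `(t₀, T]` both images equal `Φ`. Inside, the `Φ(t₀)` terms cancel and
`(Ωφ − Ωμ)(t)` is `1/Γ(α)` times the integral of the ψ-Riemann–Liouville kernel
`ψ'(u) (ψ(t) − ψ(u))^(α−1)` against a difference bounded by `M (L₁ + L₂)`, by the
Lipschitz condition on `F`. The kernel is nonnegative and is the derivative of
`−(ψ(t) − ψ(u))^α / α`, so it is integrable with integral `(ψ(t) − ψ(t₀))^α / α`;
finally `α Γ(α) = Γ(α + 1)` and `ψ(t) ≤ ψ(T)`.
-/

noncomputable def riemannLiouvilleKernel (ψ : ℝ → ℝ) (α t u : ℝ) : ℝ :=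
  deriv ψ u * (ψ t - ψ u) ^ (α - 1)

namespace riemannLiouvilleKernel

variable {ψ : ℝ → ℝ} {α a b u : ℝ}

theorem nonneg (hψ : Monotone ψ) (hu : u ≤ b) : 0 ≤ riemannLiouvilleKernel ψ α b u :=
  mul_nonneg hψ.deriv_nonneg (Real.rpow_nonneg (sub_nonneg.2 (hψ hu)) _)

theorem continuous_primitive (hα : 0 < α) (hψ : Continuous ψ) :
    Continuous fun u => -(ψ b - ψ u) ^ α / α :=
  ((continuous_const.sub hψ).rpow_const fun _ => Or.inr hα.le).neg.div_const α

theorem hasDerivAt_primitive (hα : α ≠ 0) (hψ : DifferentiableAt ℝ ψ u) (hu : ψ u ≠ ψ b) :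
    HasDerivAt (fun u => -(ψ b - ψ u) ^ α / α) (riemannLiouvilleKernel ψ α b u) u := by
  have h := ((hψ.hasDerivAt.const_sub (ψ b)).rpow_const (p := α)
    (Or.inl (sub_ne_zero.2 hu.symm))).neg.div_const α
  refine h.congr_deriv ?_
  unfold riemannLiouvilleKernel
  field_simp

theorem intervalIntegrable (hα : 0 < α) (hψ : Differentiable ℝ ψ) (hmono : StrictMono ψ)
    (hab : a ≤ b) : IntervalIntegrable (riemannLiouvilleKernel ψ α b) MeasureTheory.volume a b :=
  (intervalIntegrable_iff_integrableOn_Ioc_of_le hab).2 <|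
    integrableOn_deriv_of_nonneg (continuous_primitive hα hψ.continuous).continuousOn
      (fun _ hu => hasDerivAt_primitive hα.ne' (hψ _) (hmono hu.2).ne)
      (fun _ hu => nonneg hmono.monotone hu.2.le)

theorem integral_eq (hα : 0 < α) (hψ : Differentiable ℝ ψ) (hmono : StrictMono ψ)
    (hab : a ≤ b) : ∫ u in a..b, riemannLiouvilleKernel ψ α b u = (ψ b - ψ a) ^ α / α := by
  rw [integral_eq_sub_of_hasDerivAt_of_le hab (continuous_primitive hα hψ.continuous).continuousOn
    (fun _ hu => hasDerivAt_primitive hα.ne' (hψ _) (hmono hu.2).ne)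
    (intervalIntegrable hα hψ hmono hab), sub_self, Real.zero_rpow hα.ne']
  ring

theorem abs_integral_mul_sub_le {f g : ℝ → ℝ} {C : ℝ} (hα : 0 < α) (hψ : Differentiable ℝ ψ)
    (hmono : StrictMono ψ) (hab : a ≤ b) (hf : ContinuousOn f (Icc a b))
    (hg : ContinuousOn g (Icc a b)) (hfg : ∀ u ∈ Icc a b, |f u - g u| ≤ C) :
    |(∫ u in a..b, riemannLiouvilleKernel ψ α b u * f u) -
        ∫ u in a..b, riemannLiouvilleKernel ψ α b u * g u| ≤ C * (ψ b - ψ a) ^ α / α := by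
  have hK := intervalIntegrable hα hψ hmono hab
  rw [← uIcc_of_le hab] at hf hg
  rw [← integral_sub (hK.mul_continuousOn hf) (hK.mul_continuousOn hg), mul_div_assoc,
    ← integral_eq hα hψ hmono hab, ← integral_const_mul, ← Real.norm_eq_abs]
  refine intervalIntegral.norm_integral_le_of_norm_le hab (.of_forall fun u hu => ?_) (hK.const_mul C)
  have hKu := nonneg (α := α) hmono.monotone hu.2
  rw [← mul_sub, Real.norm_eq_abs, abs_mul, abs_of_nonneg hKu, mul_comm C]
  exact mul_le_mul_of_nonneg_left (hfg u (Ioc_subset_Icc_self hu)) hKu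

end riemannLiouvilleKernel

theorem ContinuousOn.comp_delay_s8 {F : ℝ → ℝ → ℝ → ℝ}
    (hF : Continuous fun p : ℝ × ℝ × ℝ => F p.1 p.2.1 p.2.2) {φ : ℝ → ℝ} {τ a b d : ℝ}
    (hφ : ContinuousOn φ (Icc (a - τ) d)) (hτ : 0 ≤ τ) (hbd : b ≤ d) :
    ContinuousOn (fun u => F u (φ u) (φ (u - τ))) (Icc a b) :=
  hF.comp_continuousOn <| continuousOn_id.prodMk <|
    (hφ.mono fun _ hu => ⟨by linarith [hu.1], hu.2.trans hbd⟩).prodMk <|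
      hφ.comp (continuous_sub_right τ).continuousOn fun _ hu =>
        ⟨by linarith [hu.1], by linarith [hu.2]⟩

theorem picard_operator_contractive_uniform_general
    (t₀ T a : ℝ) (htT : t₀ < T) (ha : 0 < a)
    (ψ : ℝ → ℝ) (hψC : ContDiff ℝ 1 ψ) (hψmono : StrictMono ψ)
    (α γ : ℝ) (hα0 : 0 < α)
    (L₁ L₂ : ℝ) (hL₁ : 0 < L₁) (hL₂ : 0 < L₂)
    (F : ℝ → ℝ → ℝ → ℝ)
    (hFcont : Continuous fun p : ℝ × ℝ × ℝ => F p.1 p.2.1 p.2.2)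
    (hFlip : ∀ t x y z w : ℝ, |F t x y - F t z w| ≤ L₁ * |x - z| + L₂ * |y - w|)
    (Φ : ℝ → ℝ)
    (φ μ : ℝ → ℝ)
    (hφcont : ContinuousOn φ (Icc (t₀ - a) T)) (hμcont : ContinuousOn μ (Icc (t₀ - a) T))
    (M : ℝ) (hM : 0 ≤ M)
    (hMbound : ∀ t ∈ Icc (t₀ - a) T, |φ t - μ t| ≤ M)
    (Ωφ Ωμ : ℝ → ℝ)
    (hΩφ₁ : ∀ t ∈ Icc (t₀ - a) t₀, Ωφ t = Φ t)
    (hΩφ₂ : ∀ t ∈ Ioc t₀ T,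
      Ωφ t = (ψ t - ψ t₀) ^ (1 - γ) / Real.Gamma γ * Φ t₀ +
        (1 / Real.Gamma α) *
          ∫ u in t₀..t, deriv ψ u * (ψ t - ψ u) ^ (α - 1) * F u (φ u) (φ (u - a)))
    (hΩμ₁ : ∀ t ∈ Icc (t₀ - a) t₀, Ωμ t = Φ t)
    (hΩμ₂ : ∀ t ∈ Ioc t₀ T,
      Ωμ t = (ψ t - ψ t₀) ^ (1 - γ) / Real.Gamma γ * Φ t₀ +
        (1 / Real.Gamma α) *
          ∫ u in t₀..t, deriv ψ u * (ψ t - ψ u) ^ (α - 1) * F u (μ u) (μ (u - a))) :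
    ∀ t ∈ Icc (t₀ - a) T,
      |Ωφ t - Ωμ t| ≤ M * (L₁ + L₂) * (ψ T - ψ t₀) ^ α / Real.Gamma (α + 1) := by
  intro t ht
  have hΓ := Real.Gamma_pos_of_pos hα0
  rw [Real.Gamma_add_one hα0.ne']
  rcases le_or_gt t t₀ with hle | hlt
  · rw [hΩφ₁ t ⟨ht.1, hle⟩, hΩμ₁ t ⟨ht.1, hle⟩, sub_self, abs_zero]
    have := Real.rpow_nonneg (sub_nonneg.2 (hψmono.monotone htT.le)) α
    positivity
  have hF : ∀ u ∈ Icc t₀ t,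
      |F u (φ u) (φ (u - a)) - F u (μ u) (μ (u - a))| ≤ M * (L₁ + L₂) := fun u hu =>
    calc _ ≤ L₁ * |φ u - μ u| + L₂ * |φ (u - a) - μ (u - a)| := hFlip _ _ _ _ _
      _ ≤ L₁ * M + L₂ * M := by
        gcongr <;> exact hMbound _ ⟨by linarith [hu.1], by linarith [hu.2, ht.2]⟩
      _ = M * (L₁ + L₂) := by ring
  have hdiff := riemannLiouvilleKernel.abs_integral_mul_sub_le hα0
    (hψC.differentiable one_ne_zero) hψmono hlt.le (hφcont.comp_delay_s8 hFcont ha.le ht.2)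
    (hμcont.comp_delay_s8 hFcont ha.le ht.2) hF
  have hψT : (ψ t - ψ t₀) ^ α ≤ (ψ T - ψ t₀) ^ α :=
    Real.rpow_le_rpow (sub_nonneg.2 (hψmono.monotone hlt.le))
      (sub_le_sub_right (hψmono.monotone ht.2) _) hα0.le
  rw [hΩφ₂ t ⟨hlt, ht.2⟩, hΩμ₂ t ⟨hlt, ht.2⟩, add_sub_add_left_eq_sub, ← mul_sub, abs_mul,
    abs_of_pos (one_div_pos.2 hΓ)]
  calc _ ≤ 1 / Real.Gamma α * (M * (L₁ + L₂) * (ψ t - ψ t₀) ^ α / α) := by gcongr; exact hdiff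
    _ = M * (L₁ + L₂) * (ψ t - ψ t₀) ^ α / (α * Real.Gamma α) := by field_simp
    _ ≤ _ := by gcongr

/-- Strict contractivity of the Picard operator `Ω` of the ψ-Hilfer fractional
delay equation, in the uniform metric (from the proof of Theorem 3 of the
paper). -/
theorem picard_operator_contractive_uniform
    (t₀ T a : ℝ) (htT : t₀ < T) (ha : 0 < a)
    (ψ : ℝ → ℝ) (hψC : ContDiff ℝ 1 ψ) (hψmono : StrictMono ψ)
    (hψ' : ∀ t ∈ Icc t₀ T, 0 < deriv ψ t)
    (α β γ : ℝ) (hα0 : 0 < α) (hα1 : α ≤ 1) (hβ0 : 0 ≤ β) (hβ1 : β ≤ 1)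
    (hγ : γ = α + β * (1 - α))
    (L₁ L₂ : ℝ) (hL₁ : 0 < L₁) (hL₂ : 0 < L₂)
    (F : ℝ → ℝ → ℝ → ℝ)
    (hFcont : Continuous fun p : ℝ × ℝ × ℝ => F p.1 p.2.1 p.2.2)
    (hFlip : ∀ t x y z w : ℝ, |F t x y - F t z w| ≤ L₁ * |x - z| + L₂ * |y - w|)
    (Φ : ℝ → ℝ) (hΦ : ContinuousOn Φ (Icc (t₀ - a) t₀))
    (φ μ : ℝ → ℝ)
    (hφcont : ContinuousOn φ (Icc (t₀ - a) T)) (hμcont : ContinuousOn μ (Icc (t₀ - a) T))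
    (hφΦ : ∀ t ∈ Icc (t₀ - a) t₀, φ t = Φ t) (hμΦ : ∀ t ∈ Icc (t₀ - a) t₀, μ t = Φ t)
    (M : ℝ) (hM : 0 ≤ M)
    (hMbound : ∀ t ∈ Icc (t₀ - a) T, |φ t - μ t| ≤ M)
    (Ωφ Ωμ : ℝ → ℝ)
    (hΩφ₁ : ∀ t ∈ Icc (t₀ - a) t₀, Ωφ t = Φ t)
    (hΩφ₂ : ∀ t ∈ Ioc t₀ T,
      Ωφ t = (ψ t - ψ t₀) ^ (1 - γ) / Real.Gamma γ * Φ t₀ +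
        (1 / Real.Gamma α) *
          ∫ u in t₀..t, deriv ψ u * (ψ t - ψ u) ^ (α - 1) * F u (φ u) (φ (u - a)))
    (hΩμ₁ : ∀ t ∈ Icc (t₀ - a) t₀, Ωμ t = Φ t)
    (hΩμ₂ : ∀ t ∈ Ioc t₀ T,
      Ωμ t = (ψ t - ψ t₀) ^ (1 - γ) / Real.Gamma γ * Φ t₀ +
        (1 / Real.Gamma α) *
          ∫ u in t₀..t, deriv ψ u * (ψ t - ψ u) ^ (α - 1) * F u (μ u) (μ (u - a))) :
    ∀ t ∈ Icc (t₀ - a) T,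
      |Ωφ t - Ωμ t| ≤ M * (L₁ + L₂) * (ψ T - ψ t₀) ^ α / Real.Gamma (α + 1) :=
  picard_operator_contractive_uniform_general t₀ T a htT ha ψ hψC hψmono α γ hα0 L₁ L₂ hL₁ hL₂ F
    hFcont hFlip Φ φ μ hφcont hμcont M hM hMbound Ωφ Ωμ hΩφ₁ hΩφ₂ hΩμ₁ hΩμ₂
end
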